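/- arXiv:2001.11139 — 2 statements merged into one kernel-verified Lean document; each statement's English description precedes it below -/
import Mathlib

section
/- Let y, Y : [0,T] → ℝ^m with ‖y(t) − Y(t)‖ ≤ C·h^p for all t ∈ [0,T], and let S : ℝ^m → ℝ be Lipschitz with constant K. Suppose t_t, t_c ∈ (0,T] satisfy S(y(t_t)) = R = S(Y(t_c)), the map t ↦ S(y(t)) is continuously differentiable on an open interval B containing both t_t and t_c, and |d/dt S(y(t))| > M > 0 on B. Then |t_t − t_c| ≤ (K·C/M)·h^p. -/
/-!
Near the crossing, `t ↦ S (y t)` has slope at least `M` in absolute value, so by the mean value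
theorem `M * |t_t - t_c| ≤ |S (y t_t) - S (y t_c)|`. Since both crossings hit the level `R`,
`S (y t_t) = S (Y t_c)`, and the right-hand side is `|S (Y t_c) - S (y t_c)| ≤ K * C * h ^ p`.
-/

open Set

section SlopeLowerBound

variable {f : ℝ → ℝ} {s : Set ℝ} {M : ℝ}

/-- `deriv f t = 0` wherever `f` is not differentiable, so the bound forces differentiability. -/
theorem differentiableAt_of_lt_abs_deriv (hM : 0 ≤ M) {t : ℝ} (ht : M < |deriv f t|) :
    DifferentiableAt ℝ f t :=
  differentiableAt_of_deriv_ne_zero (abs_pos.mp (hM.trans_lt ht))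

theorem mul_sub_le_abs_sub_of_lt_abs_deriv (hs : s.OrdConnected) (hM : 0 ≤ M)
    (hf : ∀ t ∈ s, M < |deriv f t|) {a b : ℝ} (ha : a ∈ s) (hb : b ∈ s) (hab : a < b) :
    M * (b - a) ≤ |f b - f a| := by
  have hdiff : ∀ t ∈ Icc a b, DifferentiableAt ℝ f t := fun t ht =>
    differentiableAt_of_lt_abs_deriv hM (hf t (hs.out ha hb ht))
  obtain ⟨c, hc, hslope⟩ := exists_deriv_eq_slope f hab
    (fun t ht => (hdiff t ht).continuousAt.continuousWithinAt)
    (fun t ht => (hdiff t (Ioo_subset_Icc_self ht)).differentiableWithinAt)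
  have hba : 0 < b - a := sub_pos.mpr hab
  have hMc := hf c (hs.out ha hb (Ioo_subset_Icc_self hc))
  rw [hslope, abs_div, abs_of_pos hba, lt_div_iff₀ hba] at hMc
  exact hMc.le

theorem mul_abs_sub_le_abs_sub_of_lt_abs_deriv (hs : s.OrdConnected) (hM : 0 ≤ M)
    (hf : ∀ t ∈ s, M < |deriv f t|) {a b : ℝ} (ha : a ∈ s) (hb : b ∈ s) :
    M * |b - a| ≤ |f b - f a| := by
  rcases lt_trichotomy a b with hab | rfl | hab
  · rw [abs_of_pos (sub_pos.mpr hab)]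
    exact mul_sub_le_abs_sub_of_lt_abs_deriv hs hM hf ha hb hab
  · simp
  · rw [abs_sub_comm b, abs_sub_comm (f b), abs_of_pos (sub_pos.mpr hab)]
    exact mul_sub_le_abs_sub_of_lt_abs_deriv hs hM hf hb ha hab

end SlopeLowerBound

theorem first_crossing_time_convergence_general
    {m : ℕ} (T C K M h R : ℝ) (p : ℕ)
    (y Y : ℝ → EuclideanSpace ℝ (Fin m)) (S : EuclideanSpace ℝ (Fin m) → ℝ)
    (hK : 0 < K) (hM : 0 < M)
    (hbound : ∀ t ∈ Icc (0 : ℝ) T, ‖y t - Y t‖ ≤ C * h ^ p)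
    (hLip : ∀ a b, |S a - S b| ≤ K * ‖a - b‖)
    (t_t t_c : ℝ) (ht_c : t_c ∈ Ioc (0 : ℝ) T)
    (hcross_t : S (y t_t) = R) (hcross_c : S (Y t_c) = R)
    (b₁ b₂ : ℝ) (hB_t : t_t ∈ Ioo b₁ b₂) (hB_c : t_c ∈ Ioo b₁ b₂)
    (hderiv : ∀ t ∈ Ioo b₁ b₂, M < |deriv (fun t => S (y t)) t|) :
    |t_t - t_c| ≤ (K * C / M) * h ^ p := by
  have hslope : M * |t_t - t_c| ≤ |S (y t_t) - S (y t_c)| :=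
    mul_abs_sub_le_abs_sub_of_lt_abs_deriv ordConnected_Ioo hM.le hderiv hB_c hB_t
  have hlevel : |S (y t_t) - S (y t_c)| ≤ K * (C * h ^ p) :=
    calc |S (y t_t) - S (y t_c)| = |S (Y t_c) - S (y t_c)| := by rw [hcross_t, hcross_c]
      _ ≤ K * ‖Y t_c - y t_c‖ := hLip _ _
      _ = K * ‖y t_c - Y t_c‖ := by rw [norm_sub_rev]
      _ ≤ K * (C * h ^ p) :=
        mul_le_mul_of_nonneg_left (hbound t_c (Ioc_subset_Icc_self ht_c)) hK.le
  rw [div_mul_eq_mul_div, le_div_iff₀ hM, mul_assoc, mul_comm]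
  exact hslope.trans hlevel

theorem first_crossing_time_convergence
    {m : ℕ} (T C K M h R : ℝ) (p : ℕ)
    (y Y : ℝ → EuclideanSpace ℝ (Fin m)) (S : EuclideanSpace ℝ (Fin m) → ℝ)
    (hh : 0 < h) (hC : 0 < C) (hK : 0 < K) (hM : 0 < M) (hp : 1 ≤ p)
    (hbound : ∀ t ∈ Icc (0 : ℝ) T, ‖y t - Y t‖ ≤ C * h ^ p)
    (hLip : ∀ a b, |S a - S b| ≤ K * ‖a - b‖)
    (t_t t_c : ℝ) (ht_t : t_t ∈ Ioc (0 : ℝ) T) (ht_c : t_c ∈ Ioc (0 : ℝ) T)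
    (hcross_t : S (y t_t) = R) (hcross_c : S (Y t_c) = R)
    (b₁ b₂ : ℝ) (hB_t : t_t ∈ Ioo b₁ b₂) (hB_c : t_c ∈ Ioo b₁ b₂)
    (hS_C1 : ContDiffOn ℝ 1 (fun t => S (y t)) (Ioo b₁ b₂))
    (hderiv : ∀ t ∈ Ioo b₁ b₂, M < |deriv (fun t => S (y t)) t|) :
    |t_t - t_c| ≤ (K * C / M) * h ^ p :=
  first_crossing_time_convergence_general T C K M h R p y Y S hK hM hbound hLip t_t t_c ht_c
    hcross_t hcross_c b₁ b₂ hB_t hB_c hderiv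
end

section
/- Let y, Y : [0,T] → ℝ^m, v ∈ ℝ^m, R ∈ ℝ, and suppose S(w) = v·w. Assume t ↦ S(y(t)) is twice continuously differentiable, f(·,·) is twice continuously differentiable in y, v·y(t_t) = R = v·Y(t_c), and y solves y' = f(y,t). Then, with ε(t) = y(t) − Y(t), there exist remainders R₁ = ½ (d²/dt²)(v·y(·))(ξ)(t_t − t_c)² for some ξ between t_t and t_c, and R₂ = ½(Y(t_c)−y(t_c))ᵀ H_y(v·f(·,t_c))(ζ)(Y(t_c)−y(t_c)) for some ζ between y(t_c) and Y(t_c), such that t_t − t_c = ( −v·ε(t_c) − R₁ ) / ( v·f(Y(t_c),t_c) + vᵀ∇_y f(Y(t_c),t_c)·ε(t_c) + R₂ ), provided the denominator is nonzero. -/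
/-!
Expanding `t ↦ ⟪v, y t⟫` to second order about `t_c`, with `y' = f (y, t)`, gives
`R = ⟪v, y t_c⟫ + ⟪v, f (y t_c) t_c⟫ (t_t - t_c) + R₁`. Expanding `w ↦ ⟪v, f w t_c⟫` to second
order along the segment from `Y t_c` to `y t_c` shows that `⟪v, f (y t_c) t_c⟫` is the
denominator `D`. As `⟪v, Y t_c⟫ = R` too, subtracting gives `-⟪v, ε t_c⟫ = D (t_t - t_c) + R₁`.
-/

open Set RealInnerProductSpace

theorem exists_taylor_two_lagrange {g : ℝ → ℝ} (hg : ContDiff ℝ 2 g) (a b : ℝ) :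
    ∃ ξ ∈ uIcc a b,
      g b = g a + deriv g a * (b - a) + 1 / 2 * iteratedDeriv 2 g ξ * (b - a) ^ 2 := by
  rcases eq_or_ne a b with rfl | hab
  · exact ⟨a, left_mem_uIcc, by ring⟩
  obtain ⟨ξ, hξ, h⟩ := taylor_mean_remainder_lagrange_iteratedDeriv (n := 1) hab hg.contDiffOn
  have hderiv : iteratedDerivWithin 1 g (uIcc a b) a = deriv g a := by
    rw [iteratedDerivWithin_one]
    exact (hg.differentiable two_ne_zero a).derivWithin
      (uniqueDiffOn_uIcc hab a left_mem_uIcc)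
  refine ⟨ξ, uIoo_subset_uIcc_self hξ, ?_⟩
  simp only [taylorWithinEval_succ, taylor_within_zero_eval, hderiv] at h
  norm_num at h
  linarith

section Segment

variable {E F : Type*} [NormedAddCommGroup E] [NormedSpace ℝ E]
  [NormedAddCommGroup F] [NormedSpace ℝ F]

theorem DifferentiableAt.hasDerivAt_comp_lineMap {φ : E → F} {a b : E} {s : ℝ}
    (hφ : DifferentiableAt ℝ φ (AffineMap.lineMap a b s)) :
    HasDerivAt (fun s => φ (AffineMap.lineMap a b s))
      (fderiv ℝ φ (AffineMap.lineMap a b s) (b - a)) s :=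
  hφ.hasFDerivAt.comp_hasDerivAt s AffineMap.hasDerivAt_lineMap

theorem exists_taylor_two_lagrange_segment {h : E → ℝ} (hh : ContDiff ℝ 2 h) (a b : E) :
    ∃ ζ ∈ segment ℝ a b, h b = h a + fderiv ℝ h a (b - a)
      + 1 / 2 * fderiv ℝ (fun z => fderiv ℝ h z (b - a)) ζ (b - a) := by
  set ℓ : ℝ → E := ⇑(AffineMap.lineMap (k := ℝ) a b)
  have hh₁ : Differentiable ℝ h := hh.differentiable two_ne_zero
  have hdh : Differentiable ℝ (fun z => fderiv ℝ h z (b - a)) :=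
    ((hh.fderiv_right (m := 1) le_rfl).differentiable one_ne_zero).clm_apply
      (differentiable_const _)
  have hderiv : deriv (h ∘ ℓ) = fun s => fderiv ℝ h (ℓ s) (b - a) :=
    funext fun s => ((hh₁ _).hasDerivAt_comp_lineMap).deriv
  obtain ⟨σ, hσ, htaylor⟩ := exists_taylor_two_lagrange (g := h ∘ ℓ) (hh.comp (by fun_prop)) 0 1
  have hderiv2 : iteratedDeriv 2 (h ∘ ℓ) σ
      = fderiv ℝ (fun z => fderiv ℝ h z (b - a)) (ℓ σ) (b - a) := by
    rw [iteratedDeriv_succ, iteratedDeriv_one, hderiv]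
    exact ((hdh _).hasDerivAt_comp_lineMap).deriv
  refine ⟨ℓ σ, segment_eq_image_lineMap ℝ a b ▸ mem_image_of_mem ℓ
    (by rwa [uIcc_of_le zero_le_one] at hσ), ?_⟩
  have hℓ₀ : ℓ 0 = a := AffineMap.lineMap_apply_zero a b
  have hℓ₁ : ℓ 1 = b := AffineMap.lineMap_apply_one a b
  simpa only [hderiv2, hderiv, Function.comp_apply, hℓ₀, hℓ₁, sub_zero, one_pow, mul_one]
    using htaylor

theorem fderiv_clm_apply_neg_apply_neg (L : E → E →L[ℝ] F) (x d : E) :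
    fderiv ℝ (fun z => L z (-d)) x (-d) = fderiv ℝ (fun z => L z d) x d := by
  simp only [map_neg, fderiv_fun_neg, neg_apply, neg_neg]

end Segment

theorem first_crossing_error_representation_general
    {m : ℕ} (R t_t t_c : ℝ)
    (y Y : ℝ → EuclideanSpace ℝ (Fin m))
    (v : EuclideanSpace ℝ (Fin m))
    (f : EuclideanSpace ℝ (Fin m) → ℝ → EuclideanSpace ℝ (Fin m))
    (hy : ∀ t, HasDerivAt y (f (y t) t) t)
    (hf : ∀ t, ContDiff ℝ 2 (fun z => f z t))
    (hSy : ContDiff ℝ 2 (fun t => ⟪v, y t⟫))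
    (hcross_t : ⟪v, y t_t⟫ = R)
    (hcross_c : ⟪v, Y t_c⟫ = R) :
    ∃ ξ ∈ uIcc t_t t_c, ∃ ζ ∈ segment ℝ (y t_c) (Y t_c),
      ∀ R₁ R₂ : ℝ,
        R₁ = (1 / 2) * iteratedDeriv 2 (fun t => ⟪v, y t⟫) ξ * (t_t - t_c) ^ 2 →
        R₂ = (1 / 2) *
              (fderiv ℝ (fun z => (fderiv ℝ (fun w => ⟪v, f w t_c⟫) z) (Y t_c - y t_c)) ζ)
                (Y t_c - y t_c) →
        (⟪v, f (Y t_c) t_c⟫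
            + (fderiv ℝ (fun w => ⟪v, f w t_c⟫) (Y t_c)) (y t_c - Y t_c) + R₂) ≠ 0 →
        t_t - t_c =
          (-(⟪v, y t_c - Y t_c⟫) - R₁) /
            (⟪v, f (Y t_c) t_c⟫
              + (fderiv ℝ (fun w => ⟪v, f w t_c⟫) (Y t_c)) (y t_c - Y t_c) + R₂) := by
  have hderiv : HasDerivAt (fun t => ⟪v, y t⟫) ⟪v, f (y t_c) t_c⟫ t_c :=
    (innerSL ℝ v).hasFDerivAt.comp_hasDerivAt t_c (hy t_c)
  obtain ⟨ξ, hξ, htime⟩ := exists_taylor_two_lagrange hSy t_c t_t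
  obtain ⟨ζ, hζ, hspace⟩ := exists_taylor_two_lagrange_segment (h := fun w => ⟪v, f w t_c⟫)
    ((innerSL ℝ v).contDiff.comp (hf t_c)) (Y t_c) (y t_c)
  refine ⟨ξ, uIcc_comm t_c t_t ▸ hξ, ζ, segment_symm ℝ (Y t_c) (y t_c) ▸ hζ, ?_⟩
  rintro R₁ R₂ rfl rfl hD
  rw [← neg_sub (y t_c) (Y t_c), fderiv_clm_apply_neg_apply_neg] at hD ⊢
  rw [hderiv.deriv] at htime
  rw [eq_div_iff hD, inner_sub_right]
  linear_combination hcross_t - hcross_c - htime - (t_t - t_c) * hspace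

theorem first_crossing_error_representation
    {m : ℕ} (T R t_t t_c : ℝ)
    (y Y : ℝ → EuclideanSpace ℝ (Fin m))
    (v : EuclideanSpace ℝ (Fin m))
    (f : EuclideanSpace ℝ (Fin m) → ℝ → EuclideanSpace ℝ (Fin m))
    (hy : ∀ t, HasDerivAt y (f (y t) t) t)
    (hf : ∀ t, ContDiff ℝ 2 (fun z => f z t))
    (hSy : ContDiff ℝ 2 (fun t => ⟪v, y t⟫))
    (hcross_t : ⟪v, y t_t⟫ = R)
    (hcross_c : ⟪v, Y t_c⟫ = R) :
    ∃ ξ ∈ uIcc t_t t_c, ∃ ζ ∈ segment ℝ (y t_c) (Y t_c),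
      ∀ R₁ R₂ : ℝ,
        R₁ = (1 / 2) * iteratedDeriv 2 (fun t => ⟪v, y t⟫) ξ * (t_t - t_c) ^ 2 →
        R₂ = (1 / 2) *
              (fderiv ℝ (fun z => (fderiv ℝ (fun w => ⟪v, f w t_c⟫) z) (Y t_c - y t_c)) ζ)
                (Y t_c - y t_c) →
        (⟪v, f (Y t_c) t_c⟫
            + (fderiv ℝ (fun w => ⟪v, f w t_c⟫) (Y t_c)) (y t_c - Y t_c) + R₂) ≠ 0 →
        t_t - t_c =
          (-(⟪v, y t_c - Y t_c⟫) - R₁) /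
            (⟪v, f (Y t_c) t_c⟫
              + (fderiv ℝ (fun w => ⟪v, f w t_c⟫) (Y t_c)) (y t_c - Y t_c) + R₂) :=
  first_crossing_error_representation_general R t_t t_c y Y v f hy hf hSy hcross_t hcross_c
end
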